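/- arXiv:2602.07583 — 3 statements merged into one kernel-verified Lean document; each statement's English description precedes it below -/
import Mathlib

section
/- Let n, k, l, p, q be integers satisfying 1 ≤ l < k ≤ n and 1 ≤ q ≤ p ≤ n. Then (n - 2(p - q))·(k + l) + 2(p² - q²) - n ≥ 0. -/
/-!
Put `s = k + l` and `a = p - q`. The expression equals `n (s - 1) + 2 a (p + q - s)`.
The first term is at least `s (s - 1) / 2` because `s ≤ 2 n`; since `p + q ≥ 2 + a`, the
second is at least `2 a (2 + a - s) ≥ -(s - 2)² / 2` by AM-GM, and `s (s - 1) - (s - 2)² = 3 s - 4`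
is nonnegative once `s ≥ 2`.
-/

section

variable {R : Type*} [CommRing R] [LinearOrder R] [IsStrictOrderedRing R]

lemma neg_sq_le_four_mul_mul_add_sub (a s : R) : -(s - 2) ^ 2 ≤ 4 * a * (2 + a - s) := by
  have := four_mul_le_sq_add a (s - 2 - a)
  linarith

lemma mul_sub_one_add_mul_two_add_sub_nonneg {n s a q : R} (hs : 2 ≤ s) (hsn : s ≤ 2 * n)
    (ha : 0 ≤ a) (hq : 1 ≤ q) : 0 ≤ n * (s - 1) + 2 * a * (2 * q + a - s) := by
  have hn_term : s * (s - 1) ≤ 2 * n * (s - 1) := mul_le_mul_of_nonneg_right hsn (by linarith)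
  have ha_term : 4 * a * (2 + a - s) ≤ 4 * a * (2 * q + a - s) :=
    mul_le_mul_of_nonneg_left (by linarith) (by linarith)
  linarith [neg_sq_le_four_mul_mul_add_sub a s]

end

theorem integer_inequality_general (n k l p q : ℤ)
    (hl : 1 ≤ l) (hlk : l < k) (hkn : k ≤ n)
    (hq : 1 ≤ q) (hqp : q ≤ p) :
    (n - 2 * (p - q)) * (k + l) + 2 * (p ^ 2 - q ^ 2) - n ≥ 0 := by
  have key := mul_sub_one_add_mul_two_add_sub_nonneg (n := n) (s := k + l) (a := p - q)
    (by linarith) (by linarith) (by linarith) hq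
  linarith

theorem integer_inequality (n k l p q : ℤ)
    (hl : 1 ≤ l) (hlk : l < k) (hkn : k ≤ n)
    (hq : 1 ≤ q) (hqp : q ≤ p) (hpn : p ≤ n) :
    (n - 2 * (p - q)) * (k + l) + 2 * (p ^ 2 - q ^ 2) - n ≥ 0 :=
  integer_inequality_general n k l p q hl hlk hkn hq hqp
end

section
/- Fix natural numbers n, k, p. For tuples i, j : Fin m → Fin n, let δ(i, j) denote the determinant of the m×m integer matrix whose (a, b) entry is 1 if i(a) = j(b) and 0 otherwise. Then for all i, j : Fin k → Fin n, the p-fold contraction identity holds: ∑_{t : Fin p → Fin n} δ(append(t, i), append(t, j)) = (∏_{m = 0}^{p-1} (n - k - m)) · δ(i, j), where append(t, i) : Fin (p + k) → Fin n is the concatenation of t and i, the product of the factors n - k - m is computed in ℤ, and the identity holds with no injectivity assumptions on i or j. -/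
/-- The generalized Kronecker delta: the determinant of the `m × m` integer
matrix whose `(a, b)` entry is `1` if `i a = j b` and `0` otherwise. -/
def gKronecker {n m : ℕ} (i j : Fin m → Fin n) : ℤ :=
  Matrix.det (Matrix.of fun a b => if i a = j b then (1 : ℤ) else 0)

/-! Expand the delta of order `k + 1` along its first row. The diagonal entry gives `δ(i, j)`
for each of the `n` values of the contracted index `t`; the entry in column `b + 1` is nonzero
only for `t = j b`, and then its minor is `δ(i, j)` with column `b` cycled to the front, so
the signs cancel to `-δ(i, j)`. One contraction thus multiplies by `n - k`, and the `p`
contractions are peeled off one at a time, the `m`-th acting on a delta of order `k + m + 1`. -/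

open Matrix Finset

def kroneckerMatrix {α β X : Type*} [DecidableEq X] (i : α → X) (j : β → X) : Matrix α β ℤ :=
  of fun a b => if i a = j b then 1 else 0

theorem kroneckerMatrix_submatrix {α β γ δ X : Type*} [DecidableEq X] (i : α → X) (j : β → X)
    (f : γ → α) (g : δ → β) :
    (kroneckerMatrix i j).submatrix f g = kroneckerMatrix (i ∘ f) (j ∘ g) :=
  rfl

variable {n m k : ℕ}

theorem gKronecker_eq_det (i j : Fin m → Fin n) : gKronecker i j = (kroneckerMatrix i j).det :=
  rfl

theorem gKronecker_comp_perm_right (i j : Fin m → Fin n) (σ : Equiv.Perm (Fin m)) :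
    gKronecker i (j ∘ σ) = Equiv.Perm.sign σ * gKronecker i j := by
  have h := det_permute' σ (kroneckerMatrix i j)
  rw [Int.cast_id, kroneckerMatrix_submatrix] at h
  exact h

theorem gKronecker_comp_cast {m' : ℕ} (h : m' = m) (i j : Fin m → Fin n) :
    gKronecker (i ∘ Fin.cast h) (j ∘ Fin.cast h) = gKronecker i j := by
  rw [gKronecker_eq_det, gKronecker_eq_det, ← kroneckerMatrix_submatrix]
  exact det_submatrix_equiv_self (finCongr h) _

theorem gKronecker_cons_left (s : Fin n) (i : Fin k → Fin n) (j : Fin (k + 1) → Fin n) :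
    gKronecker (Fin.cons s i) j =
      ∑ c : Fin (k + 1), (-1) ^ (c : ℕ) * (if s = j c then 1 else 0) *
        gKronecker i (j ∘ c.succAbove) := by
  rw [gKronecker_eq_det, det_succ_row_zero]
  rfl

theorem gKronecker_cons_comp_succ_succAbove (i j : Fin k → Fin n) (b : Fin k) :
    gKronecker i (Fin.cons (j b) j ∘ b.succ.succAbove) = (-1) ^ (b : ℕ) * gKronecker i j := by
  have hcols : Fin.cons (j b) j ∘ b.succ.succAbove = j ∘ b.cycleRange.symm := by
    refine (Equiv.eq_comp_symm _ _ _).2 (funext fun c => ?_)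
    simp only [Function.comp_apply, Fin.succAbove_cycleRange]
    rcases eq_or_ne c b with rfl | hc
    · rw [Equiv.swap_apply_right, Fin.cons_zero]
    · rw [Equiv.swap_apply_of_ne_of_ne (Fin.succ_ne_zero c) (Fin.succ_injective _ |>.ne hc),
        Fin.cons_succ]
  rw [hcols, gKronecker_comp_perm_right, Equiv.Perm.sign_symm, Fin.sign_cycleRange]
  push_cast
  rfl

theorem sum_gKronecker_cons_cons (i j : Fin k → Fin n) :
    ∑ t : Fin n, gKronecker (Fin.cons t i) (Fin.cons t j) = ((n : ℤ) - k) * gKronecker i j := by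
  have hexpand : ∀ t : Fin n, gKronecker (Fin.cons t i) (Fin.cons t j) =
      gKronecker i j + ∑ b : Fin k, if t = j b then -gKronecker i j else 0 := by
    intro t
    rw [gKronecker_cons_left, Fin.sum_univ_succ]
    simp only [Fin.cons_zero, Fin.cons_succ, Fin.succAbove_zero, Fin.cons_comp_succ, Fin.val_zero,
      Fin.val_succ, if_true, pow_zero, one_mul, mul_one]
    congr 1
    refine sum_congr rfl fun b _ => ?_
    split_ifs with htb
    · subst htb
      rw [gKronecker_cons_comp_succ_succAbove, mul_one, ← mul_assoc, ← pow_add,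
        Odd.neg_one_pow ⟨b, by ring⟩, neg_one_mul]
    · rw [mul_zero, zero_mul]
  simp only [hexpand, sum_add_distrib]
  rw [sum_comm]
  simp only [sum_ite_eq', mem_univ, if_true, sum_const, card_univ, Fintype.card_fin, nsmul_eq_mul]
  ring

theorem gKronecker_append_cons {p : ℕ} (s : Fin n) (t : Fin p → Fin n) (i j : Fin k → Fin n) :
    gKronecker (Fin.append (Fin.cons s t) i) (Fin.append (Fin.cons s t) j) =
      gKronecker (Fin.cons s (Fin.append t i)) (Fin.cons s (Fin.append t j)) := by
  rw [Fin.append_cons, Fin.append_cons, gKronecker_comp_cast]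

theorem gKronecker_p_fold_contraction (n k p : ℕ) (i j : Fin k → Fin n) :
    ∑ t : Fin p → Fin n, gKronecker (Fin.append t i) (Fin.append t j)
      = (∏ m ∈ Finset.range p, ((n : ℤ) - k - m)) * gKronecker i j := by
  induction p with
  | zero =>
    rw [Fintype.sum_subsingleton _ Fin.elim0, Fin.elim0_append, Fin.elim0_append,
      gKronecker_comp_cast, prod_range_zero, one_mul]
  | succ p ih =>
    calc ∑ t : Fin (p + 1) → Fin n, gKronecker (Fin.append t i) (Fin.append t j)
        = ∑ t : Fin p → Fin n, ∑ s : Fin n,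
            gKronecker (Fin.cons s (Fin.append t i)) (Fin.cons s (Fin.append t j)) := by
          rw [← (Fin.consEquiv fun _ => Fin n).sum_comp, Fintype.sum_prod_type, sum_comm]
          simp only [Fin.consEquiv, Equiv.coe_fn_mk, gKronecker_append_cons]
      _ = ((n : ℤ) - k - p) * ∑ t : Fin p → Fin n, gKronecker (Fin.append t i) (Fin.append t j) := by
          rw [mul_sum]
          refine sum_congr rfl fun t _ => ?_
          rw [sum_gKronecker_cons_cons]
          push_cast
          ring
      _ = (∏ m ∈ range (p + 1), ((n : ℤ) - k - m)) * gKronecker i j := by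
          rw [ih, prod_range_succ]
          ring
end

section
/- Fix natural numbers n, k, p. For tuples i, j : Fin m → Fin n, let δ(i, j) denote the determinant of the m×m integer matrix whose (a, b) entry is 1 if i(a) = j(b) and 0 otherwise. Then for all i, j : Fin k → Fin n: ∑_{s : Fin p → Fin n} ∑_{t : Fin p → Fin n} δ(s, t) · δ(append(t, i), append(s, j)) = p! · (∏_{m = 0}^{p-1} (n - k - m)) · δ(i, j), where append denotes concatenation of tuples, the coefficient is computed in ℤ, and the identity holds with no injectivity assumptions. -/
namespace Matrix

variable {n R : Type*} [Fintype n] [DecidableEq n] [CommRing R]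

theorem det_one_add_vecMulVec (u v : n → R) : (1 + vecMulVec u v).det = 1 + v ⬝ᵥ u := by
  rw [vecMulVec_eq Unit, det_one_add_replicateCol_mul_replicateRow]

theorem det_updateRow_add_vecMulVec (A : Matrix n n R) {x : n → R} (v : n → R) {b : n}
    (hb : x b = 0) : ((A + vecMulVec x v).updateRow b v).det = (A.updateRow b v).det := by
  -- the rows other than `b` differ from those of `A.updateRow b v` by multiples of its row `b`
  have h : (A + vecMulVec x v).updateRow b v
      = (1 + vecMulVec x (Pi.single b 1)) * A.updateRow b v := by
    ext i j
    by_cases hi : i = b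
    · subst hi
      simp [Matrix.add_mul, vecMulVec_mul, vecMulVec_apply, hb]
    · simp [Matrix.add_mul, vecMulVec_mul, vecMulVec_apply, hi]
  rw [h, det_mul, det_one_add_vecMulVec]
  simp [hb]

theorem det_add_vecMulVec (A : Matrix n n R) (u v : n → R) :
    (A + vecMulVec u v).det = A.det + ∑ i, u i * (A.updateRow i v).det := by
  suffices ∀ S : Finset n, (A + vecMulVec (fun i => if i ∈ S then u i else 0) v).det
      = A.det + ∑ i ∈ S, u i * (A.updateRow i v).det by simpa using this Finset.univ
  intro S
  induction S using Finset.induction_on with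
  | empty => simp [← Pi.zero_def, zero_vecMulVec]
  | insert b S hb ih =>
    set x : n → R := fun i => if i ∈ S then u i else 0
    have hrow : A + vecMulVec (fun i => if i ∈ insert b S then u i else 0) v
        = (A + vecMulVec x v).updateRow b ((A + vecMulVec x v) b + u b • v) := by
      ext i j
      by_cases hi : i = b
      · subst hi; simp [x, vecMulVec_apply, hb]
      · simp [x, vecMulVec_apply, hi]
    rw [hrow, det_updateRow_add, det_updateRow_smul, updateRow_eq_self,
      det_updateRow_add_vecMulVec _ _ (by simp [x, hb]), ih, Finset.sum_insert hb]
    ring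

end Matrix

open Matrix Equiv

section DeltaMatrix

variable {α ι κ ι' κ' : Type*} [DecidableEq α]

def deltaMatrix (R : Type*) [Zero R] [One R] (u : ι → α) (v : κ → α) : Matrix ι κ R :=
  of fun a b => if u a = v b then 1 else 0

variable {R : Type*}

theorem deltaMatrix_comp [Zero R] [One R] (u : ι → α) (v : κ → α) (e : ι' → ι) (f : κ' → κ) :
    deltaMatrix R (u ∘ e) (v ∘ f) = (deltaMatrix R u v).submatrix e f :=
  rfl

theorem deltaMatrix_sumElim [Zero R] [One R] (u : ι → α) (u' : ι' → α) (v : κ → α)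
    (v' : κ' → α) :
    deltaMatrix R (Sum.elim u u') (Sum.elim v v')
      = fromBlocks (deltaMatrix R u v) (deltaMatrix R u v') (deltaMatrix R u' v)
          (deltaMatrix R u' v') := by
  ext (a | a) (b | b) <;> rfl

variable [CommRing R] [Fintype ι] [DecidableEq ι] [Fintype κ] [DecidableEq κ]

theorem det_deltaMatrix_eq_sum_perm (u v : ι → α) :
    (deltaMatrix R u v).det = ∑ σ : Perm ι, if u ∘ σ = v then (Perm.sign σ : R) else 0 := by
  rw [det_apply']
  refine Finset.sum_congr rfl fun σ _ => ?_
  simp [deltaMatrix, Fintype.prod_boole, funext_iff]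

theorem det_deltaMatrix_sumElim_const (c : α) (u v : ι → α) :
    (deltaMatrix R (Sum.elim (fun _ : Unit => c) u) (Sum.elim (fun _ => c) v)).det
      = (deltaMatrix R u v).det - ∑ a, if u a = c then
          ((deltaMatrix R u v).updateRow a fun b => if c = v b then 1 else 0).det else 0 := by
  have hblocks : deltaMatrix R (Sum.elim (fun _ : Unit => c) u) (Sum.elim (fun _ => c) v)
      = fromBlocks 1 (deltaMatrix R (fun _ : Unit => c) v) (deltaMatrix R u fun _ : Unit => c)
          (deltaMatrix R u v) := by
    rw [deltaMatrix_sumElim]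
    congr
    ext
    simp [deltaMatrix]
  have hschur : deltaMatrix R u v
        - (deltaMatrix R u fun _ : Unit => c) * deltaMatrix R (fun _ : Unit => c) v
      = deltaMatrix R u v
        + vecMulVec (fun a => -if u a = c then 1 else 0) fun b => if c = v b then 1 else 0 := by
    ext a b
    simp [deltaMatrix, mul_apply, vecMulVec_apply, sub_eq_add_neg]
    split_ifs <;> simp
  rw [hblocks, det_fromBlocks_one₁₁, hschur, det_add_vecMulVec, sub_eq_add_neg,
    ← Finset.sum_neg_distrib]
  simp

theorem sum_det_deltaMatrix_sumElim_const [Fintype α] (u v : ι → α) :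
    ∑ c : α, (deltaMatrix R (Sum.elim (fun _ : Unit => c) u) (Sum.elim (fun _ => c) v)).det
      = ((Fintype.card α : R) - Fintype.card ι) * (deltaMatrix R u v).det := by
  have hrow (a : ι) :
      ((deltaMatrix R u v).updateRow a fun b => if u a = v b then 1 else 0).det
        = (deltaMatrix R u v).det :=
    congrArg det (updateRow_eq_self _ a)
  simp only [det_deltaMatrix_sumElim_const, Finset.sum_sub_distrib, Finset.sum_comm (γ := α),
    Finset.sum_ite_eq, Finset.mem_univ, if_true, hrow, Finset.sum_const, Finset.card_univ,
    nsmul_eq_mul]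
  ring

theorem det_deltaMatrix_sumElim_cons {p : ℕ} (c : α) (s : Fin p → α) (u v : ι → α) :
    (deltaMatrix R (Sum.elim (Fin.cons c s : Fin (p + 1) → α) u) (Sum.elim (Fin.cons c s) v)).det
      = (deltaMatrix R (Sum.elim (fun _ : Unit => c) (Sum.elim s u))
          (Sum.elim (fun _ => c) (Sum.elim s v))).det := by
  let e : Unit ⊕ (Fin p ⊕ ι) ≃ Fin (p + 1) ⊕ ι :=
    (Equiv.sumAssoc Unit (Fin p) ι).symm.trans <| Equiv.sumCongr
      ((Equiv.sumComm _ _).trans ((Equiv.optionEquivSumPUnit _).symm.trans (finSuccEquiv p).symm))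
      (Equiv.refl ι)
  have he (w : ι → α) :
      Sum.elim (Fin.cons c s : Fin (p + 1) → α) w ∘ e = Sum.elim (fun _ => c) (Sum.elim s w) := by
    ext (_ | _ | _) <;> simp [e]
  rw [← he, ← he, deltaMatrix_comp, det_submatrix_equiv_self]

theorem sum_det_deltaMatrix_sumElim [Fintype α] (u v : ι → α) (p : ℕ) :
    ∑ s : Fin p → α, (deltaMatrix R (Sum.elim s u) (Sum.elim s v)).det
      = (∏ m ∈ Finset.range p, ((Fintype.card α : R) - Fintype.card ι - m))
          * (deltaMatrix R u v).det := by
  induction p with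
  | zero =>
    rw [Fintype.sum_unique, Finset.prod_range_zero, one_mul,
      ← det_submatrix_equiv_self (Equiv.emptySum (Fin 0) ι).symm]
    rfl
  | succ p ih =>
    calc ∑ s : Fin (p + 1) → α, (deltaMatrix R (Sum.elim s u) (Sum.elim s v)).det
        = ∑ s : Fin p → α, ∑ c : α, (deltaMatrix R (Sum.elim (fun _ : Unit => c) (Sum.elim s u))
            (Sum.elim (fun _ => c) (Sum.elim s v))).det := by
          rw [← (Fin.consEquiv fun _ => α).sum_comp, Fintype.sum_prod_type, Finset.sum_comm]
          exact Finset.sum_congr rfl fun s _ => Finset.sum_congr rfl fun c _ =>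
            det_deltaMatrix_sumElim_cons c s u v
      _ = ∑ s : Fin p → α, ((Fintype.card α : R) - (p + Fintype.card ι))
            * (deltaMatrix R (Sum.elim s u) (Sum.elim s v)).det := by
          simp only [sum_det_deltaMatrix_sumElim_const, Fintype.card_sum, Fintype.card_fin,
            Nat.cast_add]
      _ = _ := by
          rw [← Finset.mul_sum, ih, Finset.prod_range_succ]
          ring

theorem det_deltaMatrix_sumElim_comp_perm (s : κ → α) (σ : Perm κ) (u v : ι → α) :
    (deltaMatrix R (Sum.elim (s ∘ σ) u) (Sum.elim s v)).det
      = Perm.sign σ * (deltaMatrix R (Sum.elim s u) (Sum.elim s v)).det := by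
  have hcomp : Sum.elim (s ∘ σ) u = Sum.elim s u ∘ Perm.sumCongr σ (Equiv.refl ι) := by
    ext (_ | _) <;> rfl
  calc _ = ((deltaMatrix R (Sum.elim s u) (Sum.elim s v)).submatrix
        (Perm.sumCongr σ (Equiv.refl ι)) id).det := by rw [hcomp]; rfl
    _ = _ := by rw [det_permute, Perm.sign_sumCongr, Perm.sign_refl, mul_one]

theorem sum_det_deltaMatrix_mul_det_deltaMatrix_sumElim [Fintype α] (s : κ → α) (u v : ι → α) :
    ∑ t : κ → α, (deltaMatrix R s t).det * (deltaMatrix R (Sum.elim t u) (Sum.elim s v)).det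
      = (Fintype.card κ).factorial * (deltaMatrix R (Sum.elim s u) (Sum.elim s v)).det := by
  calc ∑ t : κ → α, (deltaMatrix R s t).det * (deltaMatrix R (Sum.elim t u) (Sum.elim s v)).det
      = ∑ σ : Perm κ, ∑ t : κ → α, if s ∘ σ = t then
          (Perm.sign σ : R) * (deltaMatrix R (Sum.elim t u) (Sum.elim s v)).det else 0 := by
        simp only [det_deltaMatrix_eq_sum_perm (u := s), Finset.sum_mul, ite_mul, zero_mul]
        exact Finset.sum_comm
    _ = ∑ σ : Perm κ, (deltaMatrix R (Sum.elim s u) (Sum.elim s v)).det := by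
        refine Finset.sum_congr rfl fun σ _ => ?_
        rw [Finset.sum_ite_eq, if_pos (Finset.mem_univ _), det_deltaMatrix_sumElim_comp_perm,
          ← mul_assoc, ← Int.cast_mul, ← Units.val_mul, Int.units_mul_self, Units.val_one,
          Int.cast_one, one_mul]
    _ = _ := by
        rw [Finset.sum_const, Finset.card_univ, Fintype.card_perm, nsmul_eq_mul]

end DeltaMatrix

theorem gKronecker_eq_det_deltaMatrix {n m : ℕ} (i j : Fin m → Fin n) :
    gKronecker i j = (deltaMatrix ℤ i j).det :=
  rfl

theorem gKronecker_append {n p k : ℕ} (s t : Fin p → Fin n) (i j : Fin k → Fin n) :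
    gKronecker (Fin.append s i) (Fin.append t j)
      = (deltaMatrix ℤ (Sum.elim s i) (Sum.elim t j)).det := by
  rw [← Fin.append_comp_sumElim, ← Fin.append_comp_sumElim (xs := t)]
  exact (det_submatrix_equiv_self finSumFinEquiv _).symm

theorem gKronecker_pair_contraction (n k p : ℕ) (i j : Fin k → Fin n) :
    ∑ s : Fin p → Fin n, ∑ t : Fin p → Fin n,
        gKronecker s t * gKronecker (Fin.append t i) (Fin.append s j)
      = (p.factorial : ℤ) * (∏ m ∈ Finset.range p, ((n : ℤ) - k - m)) *
        gKronecker i j := by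
  simp only [gKronecker_append]
  simp only [gKronecker_eq_det_deltaMatrix,
    sum_det_deltaMatrix_mul_det_deltaMatrix_sumElim, ← Finset.mul_sum, sum_det_deltaMatrix_sumElim,
    Fintype.card_fin, mul_assoc]
end
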